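/- arXiv:2104.09262 — 3 statements merged into one kernel-verified Lean document; each statement's English description precedes it below -/
import Mathlib

section
/- If u = u_s + z·sin φ and w = w_s - z·(1-cos φ), with u_s' = λ_s·cos φ - 1 and w_s' = -λ_s·sin φ and φ' = κ, then the fiber stretch satisfies √((1+u')² + w'²) = λ_s + z·κ (assuming λ_s + z·κ ≥ 0). -/
/-- Fiber stretch: with u = u_s + z·sin φ, w = w_s - z·(1-cos φ), and the
kinematic relations u_s' = λ_s cos φ - 1, w_s' = -λ_s sin φ, φ' = κ,
the fiber stretch satisfies √((1+u')² + w'²) = λ_s + z·κ. -/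
theorem fiber_stretch
    (u_s w_s φ lams κ : ℝ → ℝ) (z x : ℝ)
    (hus : HasDerivAt u_s (lams x * Real.cos (φ x) - 1) x)
    (hws : HasDerivAt w_s (-(lams x * Real.sin (φ x))) x)
    (hφ : HasDerivAt φ (κ x) x)
    (hlams : lams x = Real.sqrt ((1 + (lams x * Real.cos (φ x) - 1))^2 + (-(lams x * Real.sin (φ x)))^2))
    (hpos : 0 ≤ lams x + z * κ x) :
    Real.sqrt ((1 + deriv (fun t => u_s t + z * Real.sin (φ t)) x)^2 +
        (deriv (fun t => w_s t - z * (1 - Real.cos (φ t))) x)^2)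
      = lams x + z * κ x := by
  have hu : HasDerivAt (fun t => u_s t + z * Real.sin (φ t))
      ((lams x * Real.cos (φ x) - 1) + z * (Real.cos (φ x) * κ x)) x :=
    hus.add (((hφ.sin)).const_mul z)
  have hw : HasDerivAt (fun t => w_s t - z * (1 - Real.cos (φ t)))
      ((-(lams x * Real.sin (φ x))) - z * (0 - (-Real.sin (φ x) * κ x))) x :=
    hws.sub ((((hasDerivAt_const x (1:ℝ)).sub hφ.cos)).const_mul z)
  rw [hu.deriv, hw.deriv]
  have key : (1 + ((lams x * Real.cos (φ x) - 1) + z * (Real.cos (φ x) * κ x)))^2 +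
      ((-(lams x * Real.sin (φ x))) - z * (0 - (-Real.sin (φ x) * κ x)))^2
      = (lams x + z * κ x)^2 := by
    have h := Real.sin_sq_add_cos_sq (φ x)
    calc (1 + ((lams x * Real.cos (φ x) - 1) + z * (Real.cos (φ x) * κ x)))^2 +
        ((-(lams x * Real.sin (φ x))) - z * (0 - (-Real.sin (φ x) * κ x)))^2
        = (lams x + z * κ x)^2 * (Real.sin (φ x)^2 + Real.cos (φ x)^2) := by ring
      _ = (lams x + z * κ x)^2 := by rw [h]; ring
  rw [key, Real.sqrt_sq hpos]
end

section
/- Let k > 1 and φ with |sin φ| < 1/k. Then ∫₀^φ dt/√(1 - k² sin² t) = (1/k)·∫₀^{arcsin(k sin φ)} ds/√(1 - k⁻² sin² s), i.e., F_J(φ, k) = (1/k)·F_J(arcsin(k sin φ), 1/k). -/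
/-!
Substitute `s = arcsin (k sin t)`. Then `sin s = k sin t`, so
`√(1 - k⁻² sin² s) = √(1 - sin² t) = cos t`, while
`ds = k cos t dt / √(1 - k² sin² t)`; the two factors `cos t` cancel and leave
`k dt / √(1 - k² sin² t)`.
-/

open Real Set intervalIntegral

lemma mul_sin_lt_one_of_lt_arcsin {k t : ℝ} (hk : 1 ≤ k) (ht₀ : -(π / 2) ≤ t)
    (ht : t < arcsin (1 / k)) : k * sin t < 1 := by
  have hk₀ : 0 < k := by linarith
  have hsin : sin t < 1 / k := by
    calc sin t < sin (arcsin (1 / k)) :=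
          strictMonoOn_sin ⟨ht₀, ht.le.trans (arcsin_le_pi_div_two _)⟩
            ⟨neg_pi_div_two_le_arcsin _, arcsin_le_pi_div_two _⟩ ht
      _ = 1 / k :=
          sin_arcsin (by rw [le_div_iff₀ hk₀]; linarith) (div_le_one_of_le₀ hk hk₀.le)
  calc k * sin t < k * (1 / k) := mul_lt_mul_of_pos_left hsin hk₀
    _ = 1 := mul_one_div_cancel hk₀.ne'

lemma hasDerivAt_arcsin_mul_sin {k t : ℝ} (h₁ : -1 < k * sin t) (h₂ : k * sin t < 1) :
    HasDerivAt (fun t => arcsin (k * sin t)) (k * cos t / √(1 - k ^ 2 * sin t ^ 2)) t := by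
  refine ((hasDerivAt_arcsin h₁.ne' h₂.ne).comp t
    ((hasDerivAt_sin t).const_mul k)).congr_deriv ?_
  rw [mul_pow]
  ring

lemma sqrt_one_sub_inv_sq_mul_sin_arcsin_sq {k t : ℝ} (hk : k ≠ 0) (h₁ : -1 ≤ k * sin t)
    (h₂ : k * sin t ≤ 1) (hcos : 0 ≤ cos t) :
    √(1 - k⁻¹ ^ 2 * sin (arcsin (k * sin t)) ^ 2) = cos t := by
  rw [sin_arcsin h₁ h₂, ← sqrt_sq hcos, cos_sq']
  field_simp

lemma continuous_one_div_sqrt_one_sub_sq_mul_sin_sq {c : ℝ} (hc : c ^ 2 < 1) :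
    Continuous fun s => 1 / √(1 - c ^ 2 * sin s ^ 2) := by
  refine continuous_const.div (by fun_prop) fun s => (sqrt_pos.2 ?_).ne'
  nlinarith [sin_sq_le_one s, sq_nonneg c]

/-- Reciprocal-modulus transformation of the incomplete elliptic integral of the
first kind: F_J(φ,k) = (1/k)·F_J(arcsin(k sin φ), 1/k) for k > 1. -/
theorem elliptic_first_kind_reciprocal_modulus
    (k φ : ℝ) (hk : 1 < k) (hφ0 : 0 ≤ φ) (hφ : φ < Real.arcsin (1 / k)) :
    ∫ t in (0:ℝ)..φ, 1 / Real.sqrt (1 - k^2 * Real.sin t ^ 2)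
      = (1 / k) * ∫ s in (0:ℝ)..(Real.arcsin (k * Real.sin φ)),
          1 / Real.sqrt (1 - (k⁻¹)^2 * Real.sin s ^ 2) := by
  have hk₀ : 0 < k := by linarith
  have hrange : ∀ t ∈ uIcc 0 φ, 0 ≤ k * sin t ∧ k * sin t < 1 ∧ 0 < cos t := by
    intro t ht
    rw [uIcc_of_le hφ0] at ht
    have htπ : t < π / 2 := ht.2.trans_lt (hφ.trans_le (arcsin_le_pi_div_two _))
    exact ⟨mul_nonneg hk₀.le (sin_nonneg_of_nonneg_of_le_pi ht.1 (by linarith [pi_pos])),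
      mul_sin_lt_one_of_lt_arcsin hk.le (by linarith [pi_pos, ht.1]) (ht.2.trans_lt hφ),
      cos_pos_of_mem_Ioo ⟨by linarith [pi_pos, ht.1], htπ⟩⟩
  have hsqrt_pos : ∀ t ∈ uIcc 0 φ, 0 < √(1 - k ^ 2 * sin t ^ 2) := fun t ht => by
    obtain ⟨h₀, h₁, -⟩ := hrange t ht
    exact sqrt_pos.2 (by nlinarith)
  have hsubst := integral_comp_mul_deriv
    (fun t ht => hasDerivAt_arcsin_mul_sin (by linarith [hrange t ht]) (hrange t ht).2.1)
    (ContinuousOn.div (by fun_prop) (by fun_prop) fun t ht => (hsqrt_pos t ht).ne')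
    (continuous_one_div_sqrt_one_sub_sq_mul_sin_sq
      (by rw [inv_pow]; exact inv_lt_one_of_one_lt₀ (one_lt_pow₀ hk two_ne_zero)))
  rw [sin_zero, mul_zero, arcsin_zero] at hsubst
  rw [← hsubst, ← integral_const_mul]
  refine integral_congr fun t ht => ?_
  obtain ⟨h₀, h₁, hcos⟩ := hrange t ht
  have hsqrt_ne := (hsqrt_pos t ht).ne'
  simp only [Function.comp_apply,
    sqrt_one_sub_inv_sq_mul_sin_arcsin_sq hk₀.ne' (by linarith) h₁.le hcos.le]
  field_simp
end

section
/- For every nonzero continuously differentiable function v on [0,L] with v(L) = 0, one has ∫₀^L v'(x)² dx ≥ (π²/(4L²))·∫₀^L v(x)² dx, with equality for v(x) = cos(πx/(2L)). -/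
/-!
With `k = π / (2L)`, `cos (k x)` is a positive solution of `w'' + k² w = 0` on `[0, L)`, and the
Picone identity `v'² - c² v² = (v' + c v tan (c x))² - (c v² tan (c x))'` reduces the inequality to
the fundamental theorem of calculus. As `tan (k x)` blows up at `L`, use it for `c < k` instead:
then the boundary term vanishes at `L` because `v L = 0` and at `0` because `tan 0 = 0`; let
`c → k`. Equality for the cosine is `∫ sin² = ∫ cos²` over a quarter period, via `x ↦ L - x`.
-/

open Real Set Filter intervalIntegral

theorem hasDerivAt_mul_sq_mul_tan {v : ℝ → ℝ} {v' c x : ℝ} (hv : HasDerivAt v v' x)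
    (hcos : cos (c * x) ≠ 0) :
    HasDerivAt (fun y => c * v y ^ 2 * tan (c * y))
      ((v' + c * v x * tan (c * x)) ^ 2 - (v' ^ 2 - c ^ 2 * v x ^ 2)) x := by
  have htan : HasDerivAt (fun y => tan (c * y)) (1 / cos (c * x) ^ 2 * c) x :=
    (hasDerivAt_tan hcos).comp x ((hasDerivAt_id x).const_mul c |>.congr_deriv (mul_one c))
  refine (((hv.fun_pow 2).const_mul c).mul htan).congr_deriv ?_
  have hsec : 1 / cos (c * x) ^ 2 = 1 + tan (c * x) ^ 2 := by
    rw [one_div, ← inv_one_add_tan_sq hcos, inv_inv]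
  rw [hsec]
  ring

theorem sq_mul_integral_sq_le_of_cos_pos {v : ℝ → ℝ} (hv : ContDiff ℝ 1 v) {a b c : ℝ}
    (hab : a ≤ b) (hcos : ∀ x ∈ Icc a b, 0 < cos (c * x)) :
    c ^ 2 * ∫ x in a..b, v x ^ 2 ≤
      (∫ x in a..b, deriv v x ^ 2) + c * v b ^ 2 * tan (c * b) - c * v a ^ 2 * tan (c * a) := by
  have hvc : Continuous v := hv.continuous
  have hv' : Continuous (deriv v) := hv.continuous_deriv le_rfl
  have hcos' : ∀ x ∈ uIcc a b, cos (c * x) ≠ 0 := fun x hx =>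
    (hcos x (uIcc_of_le hab ▸ hx)).ne'
  set W : ℝ → ℝ := fun x => (deriv v x + c * v x * tan (c * x)) ^ 2
  set E : ℝ → ℝ := fun x => deriv v x ^ 2 - c ^ 2 * v x ^ 2
  have hW : ContinuousOn W (uIcc a b) :=
    (hv'.continuousOn.add ((continuousOn_const.mul hvc.continuousOn).mul
      (continuousOn_tan.comp (continuous_const_mul c).continuousOn hcos'))).pow 2
  have hE : Continuous E := by fun_prop
  have hFTC : ∫ x in a..b, (W x - E x) =
      c * v b ^ 2 * tan (c * b) - c * v a ^ 2 * tan (c * a) :=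
    integral_eq_sub_of_hasDerivAt
      (fun x hx => hasDerivAt_mul_sq_mul_tan
        ((hv.differentiable one_ne_zero x).hasDerivAt) (hcos' x hx))
      ((hW.sub hE.continuousOn).intervalIntegrable)
  have hW_nonneg : 0 ≤ ∫ x in a..b, W x := integral_nonneg hab fun x _ => sq_nonneg _
  have hE_eq : ∫ x in a..b, E x =
      (∫ x in a..b, deriv v x ^ 2) - c ^ 2 * ∫ x in a..b, v x ^ 2 := by
    rw [← integral_const_mul,
      ← integral_sub ((by fun_prop : Continuous fun x => deriv v x ^ 2).intervalIntegrable _ _)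
        ((by fun_prop : Continuous fun x => c ^ 2 * v x ^ 2).intervalIntegrable _ _)]
  rw [integral_sub hW.intervalIntegrable (hE.intervalIntegrable _ _), hE_eq] at hFTC
  linarith

theorem sq_mul_integral_sq_le_integral_deriv_sq {v : ℝ → ℝ} (hv : ContDiff ℝ 1 v) {L : ℝ}
    (hL : 0 < L) (hvL : v L = 0) :
    (π / (2 * L)) ^ 2 * ∫ x in (0:ℝ)..L, v x ^ 2 ≤ ∫ x in (0:ℝ)..L, deriv v x ^ 2 := by
  have hlt : ∀ c ∈ Ioo 0 (π / (2 * L)),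
      c ^ 2 * ∫ x in (0:ℝ)..L, v x ^ 2 ≤ ∫ x in (0:ℝ)..L, deriv v x ^ 2 := by
    rintro c ⟨hc0, hck⟩
    have hcL : c * L < π / 2 := by
      rwa [lt_div_iff₀ (by positivity), mul_comm 2, ← mul_assoc, ← lt_div_iff₀ two_pos] at hck
    have hcos : ∀ x ∈ Icc 0 L, 0 < cos (c * x) := fun x hx =>
      cos_pos_of_mem_Ioo ⟨by nlinarith [hx.1, pi_pos], by nlinarith [hx.2]⟩
    simpa [hvL] using sq_mul_integral_sq_le_of_cos_pos hv hL.le hcos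
  refine le_of_tendsto ?_ (eventually_of_mem (Ioo_mem_nhdsLT (by positivity)) hlt)
  exact ((continuous_pow 2).mul continuous_const).continuousWithinAt.tendsto

theorem integral_sin_mul_sq_eq_integral_cos_mul_sq {k L : ℝ} (hkL : k * L = π / 2) :
    ∫ x in (0:ℝ)..L, sin (k * x) ^ 2 = ∫ x in (0:ℝ)..L, cos (k * x) ^ 2 := by
  have h := integral_comp_sub_left (fun x => cos (k * x) ^ 2) (a := 0) (b := L) L
  simp only [sub_self, sub_zero] at h
  rw [← h]
  congr 1
  ext x
  rw [mul_sub, hkL, cos_pi_div_two_sub]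

/-- Poincaré-type inequality for C¹ functions vanishing at x = L:
∫₀^L v'² ≥ (π²/(4L²)) ∫₀^L v², with equality for v(x) = cos(πx/(2L)). -/
theorem poincare_cantilever
    (L : ℝ) (hL : 0 < L) :
    (∀ v : ℝ → ℝ, ContDiff ℝ 1 v → v L = 0 → (∃ x ∈ Set.Icc (0:ℝ) L, v x ≠ 0) →
      Real.pi^2 / (4 * L^2) * ∫ x in (0:ℝ)..L, (v x)^2
        ≤ ∫ x in (0:ℝ)..L, (deriv v x)^2) ∧
    (∫ x in (0:ℝ)..L, (deriv (fun x => Real.cos (Real.pi * x / (2 * L))) x)^2)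
      = Real.pi^2 / (4 * L^2) * ∫ x in (0:ℝ)..L, (Real.cos (Real.pi * x / (2 * L)))^2 := by
  set k := π / (2 * L)
  have hk2 : k ^ 2 = π ^ 2 / (4 * L ^ 2) := by ring
  refine ⟨fun v hv hvL _ => hk2 ▸ sq_mul_integral_sq_le_integral_deriv_sq hv hL hvL, ?_⟩
  have harg : ∀ x, π * x / (2 * L) = k * x := fun x => by ring
  have hkL : k * L = π / 2 := by simp only [k]; field_simp
  have hderiv : ∀ x, deriv (fun x => cos (k * x)) x = -(sin (k * x) * k) := fun x => by
    simpa using ((hasDerivAt_id x).const_mul k).cos.deriv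
  simp only [harg, hderiv, neg_sq, mul_pow, integral_mul_const,
    integral_sin_mul_sq_eq_integral_cos_mul_sq hkL, hk2]
  exact mul_comm _ _
end
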